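/- For any L₂-formula A: GR⁻ ⊢ A^⊤ if and only if GR° ⊢ A^⊤; consequently, GR⁻ ⊢ A^⊤ if and only if GR° ⊢ A. -/

import Mathlib

/-- Formulas of the bimodal language `L₂`: countably many propositional
variables, `⊥`, `¬`, `∨`, and two modal operators `□` (`box`) and `■` (`bb`). -/
inductive Formula : Type
  | var : ℕ → Formula
  | falsum : Formula
  | neg : Formula → Formula
  | or : Formula → Formula → Formula
  | box : Formula → Formula
  | bb : Formula → Formula

namespace Formula

/-- `A → B` is defined as `¬A ∨ B`. -/
def imp (A B : Formula) : Formula := (A.neg).or B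

/-- `A ∧ B` is defined as `¬(¬A ∨ ¬B)`. -/
def and (A B : Formula) : Formula := ((A.neg).or B.neg).neg

/-- `◇A` abbreviates `¬□¬A`. -/
def dia (A : Formula) : Formula := ((A.neg).box).neg

end Formula

/-- Propositional evaluation: variables and formulas of the form `□A`, `■A`
are treated as atoms whose truth value is given by `v`. -/
def evalProp (v : Formula → Bool) : Formula → Bool
  | .var n => v (.var n)
  | .falsum => false
  | .neg A => !(evalProp v A)
  | .or A B => evalProp v A || evalProp v B
  | .box A => v (.box A)
  | .bb A => v (.bb A)

/-- Propositional tautologies of the bimodal language `L₂`. -/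
def Taut (A : Formula) : Prop := ∀ v : Formula → Bool, evalProp v A = true

/-- The logic GRminus. -/
inductive GRminus : Formula → Prop
  | taut {A : Formula} : Taut A → GRminus A
  | k {A B : Formula} : GRminus (((A.imp B).box).imp ((A.box).imp (B.box)))
  | loeb {A : Formula} : GRminus ((((A.box).imp A).box).imp (A.box))
  | bbBox {A : Formula} : GRminus ((A.bb).imp (A.box))
  | boxBb {A : Formula} : GRminus ((A.box).imp ((A.bb).box))
  | ros {A : Formula} : GRminus ((A.box).imp ((Formula.falsum.box).or (A.bb)))
  | diaBb {A : Formula} : GRminus (((A.bb).dia).imp (A.dia))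
  | mp {A B : Formula} : GRminus (A.imp B) → GRminus A → GRminus B
  | nec {A : Formula} : GRminus A → GRminus (A.box)


/-- The logic GRcirc. -/
inductive GRcirc : Formula → Prop
  | taut {A : Formula} : Taut A → GRcirc A
  | k {A B : Formula} : GRcirc (((A.imp B).box).imp ((A.box).imp (B.box)))
  | loeb {A : Formula} : GRcirc ((((A.box).imp A).box).imp (A.box))
  | bbBox {A : Formula} : GRcirc ((A.bb).imp (A.box))
  | boxBb {A : Formula} : GRcirc ((A.box).imp ((A.bb).box))
  | ros {A : Formula} : GRcirc ((A.box).imp ((Formula.falsum.box).or (A.bb)))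
  | diaBb {A : Formula} : GRcirc (((A.bb).dia).imp (A.dia))
  | mp {A B : Formula} : GRcirc (A.imp B) → GRcirc A → GRcirc B
  | nec {A : Formula} : GRcirc A → GRcirc (A.box)
  | bbnec {A : Formula} : GRcirc A → GRcirc (A.bb)

open Classical in
/-- `A^⊤`: replace every `■`-outermost subformula `■D` of `A` with `GR° ⊢ D`
by `¬⊥`. -/
noncomputable def topTrans : Formula → Formula
  | .var n => .var n
  | .falsum => .falsum
  | .neg A => (topTrans A).neg
  | .or A B => (topTrans A).or (topTrans B)
  | .box A => (topTrans A).box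
  | .bb A => if GRcirc A then Formula.falsum.neg else Formula.bb A

/-!
In GR°, ■-necessitation makes every replaced `■D` provably equivalent to `¬⊥`, so `A` and `A^⊤`
are GR°-equivalent. Conversely, a GR°-derivation of `A` becomes a GR⁻-derivation of `A^⊤`
after applying `^⊤` to every line: ■-necessitation, the one rule GR⁻ lacks, only produces
formulas `■D` with GR° ⊢ D, which `^⊤` turns into `¬⊥`. The ■-axioms about such a `■D` survive
because GR⁻ ⊢ □D^⊤: every GR° theorem is a GR⁻ theorem under `□`, since `□A → □■A` makes
■-necessitation admissible there. As `^⊤` is idempotent, both equivalences follow.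
-/

open Formula

class IsClassical (L : Formula → Prop) : Prop where
  taut {A : Formula} : Taut A → L A
  mp {A B : Formula} : L (A.imp B) → L A → L B

instance : IsClassical GRminus := ⟨.taut, .mp⟩

instance : IsClassical GRcirc := ⟨.taut, .mp⟩

namespace IsClassical

variable {L : Formula → Prop} [IsClassical L] {A B C D : Formula}

theorem not_falsum : L falsum.neg :=
  taut fun _ => rfl

theorem imp_refl (A : Formula) : L (A.imp A) :=
  taut fun v => by simp [Formula.imp, evalProp]

theorem imp_intro (h : L B) : L (A.imp B) := by
  refine mp (taut fun v => ?_) h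
  simp only [Formula.imp, evalProp]
  cases evalProp v A <;> cases evalProp v B <;> rfl

theorem imp_trans (hAB : L (A.imp B)) (hBC : L (B.imp C)) : L (A.imp C) := by
  refine mp (mp (taut fun v => ?_) hAB) hBC
  simp only [Formula.imp, evalProp]
  cases evalProp v A <;> cases evalProp v B <;> cases evalProp v C <;> rfl

theorem neg_imp_neg (h : L (A.imp B)) : L (B.neg.imp A.neg) := by
  refine mp (taut fun v => ?_) h
  simp only [Formula.imp, evalProp]
  cases evalProp v A <;> cases evalProp v B <;> rfl

theorem or_imp_or (hAC : L (A.imp C)) (hBD : L (B.imp D)) : L ((A.or B).imp (C.or D)) := by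
  refine mp (mp (taut fun v => ?_) hAC) hBD
  simp only [Formula.imp, evalProp]
  cases evalProp v A <;> cases evalProp v B <;> cases evalProp v C <;> cases evalProp v D <;> rfl

end IsClassical

open IsClassical

theorem GRminus.toGRcirc {A : Formula} (h : GRminus A) : GRcirc A := by
  induction h with
  | taut h => exact .taut h
  | k => exact .k
  | loeb => exact .loeb
  | bbBox => exact .bbBox
  | boxBb => exact .boxBb
  | ros => exact .ros
  | diaBb => exact .diaBb
  | mp _ _ ihAB ihA => exact .mp ihAB ihA
  | nec _ ih => exact .nec ih

theorem GRminus.box_of_GRcirc {A : Formula} (h : GRcirc A) : GRminus A.box := by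
  induction h with
  | taut h => exact .nec (.taut h)
  | k => exact .nec .k
  | loeb => exact .nec .loeb
  | bbBox => exact .nec .bbBox
  | boxBb => exact .nec .boxBb
  | ros => exact .nec .ros
  | diaBb => exact .nec .diaBb
  | mp _ _ ihAB ihA => exact .mp (.mp .k ihAB) ihA
  | nec _ ih => exact .nec ih
  | bbnec _ ih => exact .mp .boxBb ih

theorem GRcirc.box_imp_box {A B : Formula} (h : GRcirc (A.imp B)) : GRcirc (A.box.imp B.box) :=
  .mp .k (.nec h)

theorem GRminus.box_imp_box_of_GRcirc {A B : Formula} (h : GRcirc (A.imp B)) :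
    GRminus (A.box.imp B.box) :=
  .mp .k (box_of_GRcirc h)

theorem GRminus.dia_imp_dia_of_GRcirc {A B : Formula} (h : GRcirc (A.imp B)) :
    GRminus (A.dia.imp B.dia) :=
  neg_imp_neg (box_imp_box_of_GRcirc (neg_imp_neg h))

section topTrans

variable {A : Formula}

theorem topTrans_bb_of_GRcirc (h : GRcirc A) : topTrans A.bb = falsum.neg := if_pos h

theorem topTrans_bb_of_not_GRcirc (h : ¬GRcirc A) : topTrans A.bb = A.bb := if_neg h

theorem topTrans_imp (A B : Formula) : topTrans (A.imp B) = (topTrans A).imp (topTrans B) := rfl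

theorem topTrans_or (A B : Formula) : topTrans (A.or B) = (topTrans A).or (topTrans B) := rfl

theorem topTrans_box (A : Formula) : topTrans A.box = (topTrans A).box := rfl

theorem topTrans_dia (A : Formula) : topTrans A.dia = (topTrans A).dia := rfl

theorem topTrans_topTrans (A : Formula) : topTrans (topTrans A) = topTrans A := by
  induction A with
  | var | falsum => rfl
  | neg A ih => simp only [topTrans, ih]
  | or A B ihA ihB => simp only [topTrans, ihA, ihB]
  | box A ih => simp only [topTrans, ih]
  | bb A =>
    by_cases h : GRcirc A
    · rw [topTrans_bb_of_GRcirc h]; rfl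
    · rw [topTrans_bb_of_not_GRcirc h, topTrans_bb_of_not_GRcirc h]

theorem evalProp_topTrans (v : Formula → Bool) (A : Formula) :
    evalProp v (topTrans A) = evalProp (fun X => evalProp v (topTrans X)) A := by
  induction A with
  | var | falsum | box | bb => rfl
  | neg A ih => simp only [topTrans, evalProp, ih]
  | or A B ihA ihB => simp only [topTrans, evalProp, ihA, ihB]

theorem Taut.topTrans (h : Taut A) : Taut (topTrans A) := fun v => by
  rw [evalProp_topTrans]; exact h _

theorem GRcirc.imp_topTrans_and_topTrans_imp (A : Formula) :
    GRcirc (A.imp (topTrans A)) ∧ GRcirc ((topTrans A).imp A) := by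
  induction A with
  | var | falsum => exact ⟨imp_refl _, imp_refl _⟩
  | neg A ih => exact ⟨neg_imp_neg ih.2, neg_imp_neg ih.1⟩
  | or A B ihA ihB => exact ⟨or_imp_or ihA.1 ihB.1, or_imp_or ihA.2 ihB.2⟩
  | box A ih => exact ⟨box_imp_box ih.1, box_imp_box ih.2⟩
  | bb A =>
    by_cases h : GRcirc A
    · rw [topTrans_bb_of_GRcirc h]
      exact ⟨imp_intro not_falsum, imp_intro (.bbnec h)⟩
    · rw [topTrans_bb_of_not_GRcirc h]
      exact ⟨imp_refl _, imp_refl _⟩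

theorem GRcirc.imp_topTrans (A : Formula) : GRcirc (A.imp (topTrans A)) :=
  (imp_topTrans_and_topTrans_imp A).1

theorem GRcirc.topTrans_imp (A : Formula) : GRcirc ((topTrans A).imp A) :=
  (imp_topTrans_and_topTrans_imp A).2

theorem GRcirc.topTrans (h : GRcirc A) : GRcirc (topTrans A) :=
  .mp (imp_topTrans A) h

end topTrans

namespace GRminus

variable (A : Formula)

theorem topTrans_bbBox : GRminus (topTrans (A.bb.imp A.box)) := by
  rw [topTrans_imp]
  by_cases h : GRcirc A
  · exact imp_intro (box_of_GRcirc h.topTrans)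
  · rw [topTrans_bb_of_not_GRcirc h]
    exact imp_trans .bbBox (box_imp_box_of_GRcirc (.imp_topTrans A))

theorem topTrans_boxBb : GRminus (topTrans (A.box.imp A.bb.box)) := by
  simp only [topTrans_imp, topTrans_box]
  by_cases h : GRcirc A
  · rw [topTrans_bb_of_GRcirc h]
    exact imp_intro (.nec not_falsum)
  · rw [topTrans_bb_of_not_GRcirc h]
    exact imp_trans (box_imp_box_of_GRcirc (.topTrans_imp A)) .boxBb

theorem topTrans_ros : GRminus (topTrans (A.box.imp (falsum.box.or A.bb))) := by
  simp only [topTrans_imp, topTrans_box, topTrans_or]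
  by_cases h : GRcirc A
  · rw [topTrans_bb_of_GRcirc h]
    exact .taut fun v => by simp [Formula.imp, evalProp]
  · rw [topTrans_bb_of_not_GRcirc h]
    exact imp_trans (box_imp_box_of_GRcirc (.topTrans_imp A)) .ros

theorem topTrans_diaBb : GRminus (topTrans (A.bb.dia.imp A.dia)) := by
  rw [topTrans_imp, topTrans_dia, topTrans_dia]
  by_cases h : GRcirc A
  · rw [topTrans_bb_of_GRcirc h]
    exact dia_imp_dia_of_GRcirc (imp_intro h.topTrans)
  · rw [topTrans_bb_of_not_GRcirc h]
    exact imp_trans .diaBb (dia_imp_dia_of_GRcirc (.imp_topTrans A))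

theorem topTrans_of_GRcirc {A : Formula} (h : GRcirc A) : GRminus (topTrans A) := by
  induction h with
  | taut h => exact .taut h.topTrans
  | k => exact .k
  | loeb => exact .loeb
  | bbBox => exact topTrans_bbBox _
  | boxBb => exact topTrans_boxBb _
  | ros => exact topTrans_ros _
  | diaBb => exact topTrans_diaBb _
  | mp _ _ ihAB ihA => exact .mp ihAB ihA
  | nec _ ih => exact .nec ih
  | bbnec hA => rw [topTrans_bb_of_GRcirc hA]; exact not_falsum

end GRminus

/-- `GR⁻ ⊢ A^⊤` iff `GR° ⊢ A^⊤`; consequently `GR⁻ ⊢ A^⊤` iff `GR° ⊢ A`. -/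
theorem GRminus_topTrans_iff (A : Formula) :
    (GRminus (topTrans A) ↔ GRcirc (topTrans A)) ∧
    (GRminus (topTrans A) ↔ GRcirc A) := by
  refine ⟨⟨GRminus.toGRcirc, fun h => ?_⟩, ⟨fun h => ?_, GRminus.topTrans_of_GRcirc⟩⟩
  · simpa only [topTrans_topTrans] using GRminus.topTrans_of_GRcirc h
  · exact .mp (.topTrans_imp A) h.toGRcirc
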